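/- arXiv:1501.00076 — 2 statements merged into one kernel-verified Lean document; each statement's English description precedes it below -/
import Mathlib

section
/- Let n ≥ 3 be odd and suppose V is an n-point subset of ℝ containing the maximum possible number (n-1)²/4 of 3-term arithmetic progressions, normalized so that its middle point (the ((n+1)/2)-th smallest) is 0 and the next point is 1. Then V is symmetric about 0, i.e., V = -V. -/
attribute [local instance] Classical.propDecidable

/-!
Count each 3-term progression by its middle term `x`: its first term `y < x` determines it, and
`y ↦ 2x - y` injects these into the points above `x`, so `x` is the middle of at most
`min (#below x) (#above x)` progressions. With `2m + 1` points the numbers of points below are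
distinct values in `0, …, 2m`, so the total is at most `∑ min (i, 2m - i) = m²`, and equality
forces every bound to be attained. At the median `0` this says that `-y ∈ V` for each negative
`y ∈ V`, and as there are equally many negative and positive points, negation maps the
negative points onto the positive ones.
-/

open Finset

theorem Finset.sum_range_min_two_mul_sub (m : ℕ) :
    ∑ i ∈ range (2 * m + 1), min i (2 * m - i) = m * m := by
  induction m with
  | zero => simp
  | succ m ih =>
    have shift : ∀ i ∈ range (2 * m + 1),
        min (i + 1) (2 * (m + 1) - (i + 1)) = min i (2 * m - i) + 1 := by
      intro i hi
      rw [mem_range] at hi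
      omega
    rw [show 2 * (m + 1) + 1 = 2 * m + 1 + 1 + 1 by ring, sum_range_succ, sum_range_succ',
      sum_congr rfl shift, sum_add_distrib, ih, show 2 * (m + 1) - (2 * m + 1 + 1) = 0 by omega]
    simp only [sum_const, card_range, smul_eq_mul, mul_one, tsub_zero, zero_le, inf_of_le_left,
      add_zero, le_add_iff_nonneg_left, inf_of_le_right]
    ring

section LinearOrder

variable {α : Type*} [LinearOrder α] {V : Finset α}

theorem Finset.eq_of_insert_triple_eq {a b c a' b' c' : α} (hab : a < b) (hbc : b < c)
    (hab' : a' < b') (hbc' : b' < c') (h : ({a, b, c} : Finset α) = {a', b', c'}) :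
    a = a' ∧ b = b' ∧ c = c' := by
  have mem : ∀ x, (x = a ∨ x = b ∨ x = c) ↔ (x = a' ∨ x = b' ∨ x = c') := by
    simpa using Finset.ext_iff.mp h
  have ha := (mem a).1 (by simp)
  have hb := (mem b).1 (by simp)
  have hc := (mem c).1 (by simp)
  have ha' := (mem a').2 (by simp)
  have hc' := (mem c').2 (by simp)
  have haa' : a = a' := by rcases ha with h | h | h <;> rcases ha' with h' | h' | h' <;> order
  have hcc' : c = c' := by rcases hc with h | h | h <;> rcases hc' with h' | h' | h' <;> order
  refine ⟨haa', ?_, hcc'⟩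
  rcases hb with h | h | h <;> order

theorem Finset.card_filter_lt_add_card_filter_gt {x : α} (hx : x ∈ V) :
    #{y ∈ V | y < x} + #{y ∈ V | x < y} + 1 = #V := by
  have hge : {y ∈ V | ¬y < x} = insert x {y ∈ V | x < y} := by
    ext y
    simp only [mem_filter, mem_insert]
    grind
  rw [add_assoc, ← card_insert_of_notMem (a := x) (s := {y ∈ V | x < y}) (by simp), ← hge,
    card_filter_add_card_filter_not]

theorem Finset.strictMonoOn_card_filter_lt : StrictMonoOn (fun x ↦ #{y ∈ V | y < x}) V := by
  intro x hx x' _ h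
  refine card_lt_card ((ssubset_iff_of_subset ?_).2 ⟨x, by simp [mem_coe.1 hx, h], by simp⟩)
  exact monotone_filter_right _ fun y _ hy ↦ hy.trans h

theorem Finset.sum_min_card_filter_lt_card_filter_gt_le {m : ℕ} (hV : #V = 2 * m + 1) :
    ∑ x ∈ V, min #{y ∈ V | y < x} #{y ∈ V | x < y} ≤ m * m := by
  have hrank : ∀ x ∈ V, #{y ∈ V | y < x} + #{y ∈ V | x < y} = 2 * m := fun x hx ↦ by
    have := card_filter_lt_add_card_filter_gt hx
    omega
  calc ∑ x ∈ V, min #{y ∈ V | y < x} #{y ∈ V | x < y}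
      = ∑ x ∈ V, min #{y ∈ V | y < x} (2 * m - #{y ∈ V | y < x}) :=
        sum_congr rfl fun x hx ↦ by rw [← hrank x hx, Nat.add_sub_cancel_left]
    _ = ∑ i ∈ V.image fun x ↦ #{y ∈ V | y < x}, min i (2 * m - i) := by
        rw [sum_image strictMonoOn_card_filter_lt.injOn]
    _ ≤ ∑ i ∈ range (2 * m + 1), min i (2 * m - i) := by
        refine sum_le_sum_of_subset (image_subset_iff.2 fun x hx ↦ mem_range.2 ?_)
        have := hrank x hx
        omega
    _ = m * m := sum_range_min_two_mul_sub m

end LinearOrder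

section OrderedRing

variable {α : Type*} [CommRing α] [LinearOrder α] [IsStrictOrderedRing α] {V : Finset α}

noncomputable def Finset.threeAPs (V : Finset α) : Finset (Finset α) :=
  {P ∈ V.powersetCard 3 | ∃ a d : α, 0 < d ∧ P = {a, a + d, a + 2 * d}}

theorem Finset.card_threeAPs_eq_sum (V : Finset α) :
    #V.threeAPs = ∑ x ∈ V, #{y ∈ V | y < x ∧ 2 * x - y ∈ V} := by
  rw [← card_sigma]
  symm
  refine card_bij (fun p _ ↦ {p.2, p.1, 2 * p.1 - p.2}) ?maps ?inj ?surj
  case maps =>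
    rintro ⟨x, y⟩ hp
    simp only [mem_sigma, mem_filter] at hp
    obtain ⟨hx, hy, hyx, hz⟩ := hp
    have hxz : x < 2 * x - y := by linarith
    rw [threeAPs, mem_filter, mem_powersetCard]
    refine ⟨⟨by simp [insert_subset_iff, *],
      card_eq_three.2 ⟨_, _, _, hyx.ne, (hyx.trans hxz).ne, hxz.ne, rfl⟩⟩,
      y, x - y, sub_pos.2 hyx, ?_⟩
    rw [add_sub_cancel, show y + 2 * (x - y) = 2 * x - y by ring]
  case inj =>
    rintro ⟨x, y⟩ hp ⟨x', y'⟩ hp' h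
    simp only [mem_sigma, mem_filter] at hp hp'
    obtain ⟨rfl, rfl, -⟩ := eq_of_insert_triple_eq hp.2.2.1 (by linarith [hp.2.2.1])
      hp'.2.2.1 (by linarith [hp'.2.2.1]) h
    rfl
  case surj =>
    intro P hP
    obtain ⟨hPV, a, d, hd, rfl⟩ := mem_filter.1 hP
    have hsub := (mem_powersetCard.1 hPV).1
    have h2 : 2 * (a + d) - a = a + 2 * d := by ring
    refine ⟨⟨a + d, a⟩, ?_, by simp only [h2]⟩
    simp only [mem_sigma, mem_filter, h2]
    exact ⟨hsub (by simp), hsub (by simp), by linarith, hsub (by simp)⟩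

theorem Finset.card_filter_ap_le_card_filter_gt (x : α) :
    #{y ∈ V | y < x ∧ 2 * x - y ∈ V} ≤ #{y ∈ V | x < y} := by
  refine card_le_card_of_injOn (2 * x - ·) (fun y hy ↦ ?_) fun y _ y' _ h ↦ by simpa using h
  simp only [mem_coe, mem_filter] at hy ⊢
  exact ⟨hy.2.2, by linarith [hy.2.1]⟩

theorem Finset.card_filter_ap_eq_min_of_card_threeAPs_eq {m : ℕ} (hV : #V = 2 * m + 1)
    (h : #V.threeAPs = m * m) (x : α) (hx : x ∈ V) :
    #{y ∈ V | y < x ∧ 2 * x - y ∈ V} = min #{y ∈ V | y < x} #{y ∈ V | x < y} := by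
  have hle : ∀ x ∈ V, #{y ∈ V | y < x ∧ 2 * x - y ∈ V} ≤ min #{y ∈ V | y < x} #{y ∈ V | x < y} :=
    fun x _ ↦ le_min (card_le_card (monotone_filter_right _ fun _ _ h ↦ h.1))
      (card_filter_ap_le_card_filter_gt x)
  refine (sum_eq_sum_iff_of_le hle).1 (le_antisymm (sum_le_sum hle) ?_) x hx
  rw [← card_threeAPs_eq_sum, h]
  exact sum_min_card_filter_lt_card_filter_gt_le hV

theorem Finset.mem_iff_two_mul_sub_mem_of_card_filter_ap_eq {c : α} (hc : c ∈ V)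
    (hlt : #{y ∈ V | y < c ∧ 2 * c - y ∈ V} = #{y ∈ V | y < c})
    (hgt : #{y ∈ V | c < y} ≤ #{y ∈ V | y < c}) (x : α) : x ∈ V ↔ 2 * c - x ∈ V := by
  have below : ∀ y ∈ V, y < c → 2 * c - y ∈ V := by
    have heq := eq_of_subset_of_card_le (monotone_filter_right V fun _ _ h ↦ h.1) hlt.ge
    intro y hy hyc
    have : y ∈ {y ∈ V | y < c ∧ 2 * c - y ∈ V} := by rw [heq]; exact mem_filter.2 ⟨hy, hyc⟩
    exact (mem_filter.1 this).2.2
  have above : ∀ z ∈ V, c < z → 2 * c - z ∈ V := by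
    intro z hz hcz
    have hsurj := surjOn_of_injOn_of_card_le (s := {y ∈ V | y < c}) (t := {y ∈ V | c < y})
      (2 * c - ·)
      (fun y hy ↦ by
        simp only [mem_coe, mem_filter] at hy ⊢
        exact ⟨below y hy.1 hy.2, by linarith [hy.2]⟩)
      (fun y _ y' _ h ↦ by simpa using h) hgt
    obtain ⟨y, hy, rfl⟩ := hsurj (mem_filter.2 ⟨hz, hcz⟩)
    simpa using (mem_filter.1 hy).1
  have reflect : ∀ x ∈ V, 2 * c - x ∈ V := by
    intro x hx
    rcases lt_trichotomy x c with h | rfl | h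
    · exact below x hx h
    · rwa [two_mul, add_sub_cancel_right]
    · exact above x hx h
  exact ⟨reflect x, fun h ↦ by simpa using reflect _ h⟩

end OrderedRing

theorem stmt_6_general (n : ℕ) (hodd : Odd n)
    (V : Finset ℝ) (hV : V.card = n)
    (hopt : ((V.powersetCard 3).filter
        (fun P => ∃ a d : ℝ, 0 < d ∧ P = {a, a + d, a + 2 * d})).card
      = (n - 1) ^ 2 / 4)
    (h0 : (0 : ℝ) ∈ V)
    (hmid : (V.filter (fun x => x < (0 : ℝ))).card = (n - 1) / 2) :
    ∀ x : ℝ, x ∈ V ↔ -x ∈ V := by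
  obtain ⟨m, rfl⟩ := hodd
  have hmax : #V.threeAPs = m * m := by
    rw [threeAPs, hopt, Nat.add_sub_cancel, show (2 * m) ^ 2 = 4 * (m * m) by ring]
    omega
  have hbelow : #{y ∈ V | y < 0} = m := by
    rw [hmid]
    omega
  have habove : #{y ∈ V | 0 < y} = m := by
    have := card_filter_lt_add_card_filter_gt h0
    omega
  have hap := card_filter_ap_eq_min_of_card_threeAPs_eq hV hmax 0 h0
  rw [hbelow, habove, min_self] at hap
  intro x
  simpa using mem_iff_two_mul_sub_mem_of_card_filter_ap_eq h0 (hap.trans hbelow.symm)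
    (by rw [hbelow, habove]) x

theorem stmt_6 (n : ℕ) (hn : 3 ≤ n) (hodd : Odd n)
    (V : Finset ℝ) (hV : V.card = n)
    (hopt : ((V.powersetCard 3).filter
        (fun P => ∃ a d : ℝ, 0 < d ∧ P = {a, a + d, a + 2 * d})).card
      = (n - 1) ^ 2 / 4)
    (h0 : (0 : ℝ) ∈ V)
    (hmid : (V.filter (fun x => x < (0 : ℝ))).card = (n - 1) / 2)
    (h1 : (1 : ℝ) ∈ V)
    (hnext : ∀ x ∈ V, 0 < x → 1 ≤ x) :
    ∀ x : ℝ, x ∈ V ↔ -x ∈ V :=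
  stmt_6_general n hodd V hV hopt h0 hmid
end

section
/- Let n ≥ k ≥ 4 with (k-1) dividing n, and let V = {0, 2, 3, 4, …, n} (an (n+1)-term arithmetic progression of consecutive integers with the second point removed, so |V| = n). Then V contains exactly n(n-k+1)/(2(k-1)) k-term arithmetic progressions, i.e., V is optimal for k-term arithmetic progressions among n-point sets. -/
attribute [local instance] Classical.propDecidable

/-!
A `k`-term progression is determined by its start `a` and step `d`, and it lies in
`V = {0, 2, 3, …, n}` exactly when `a + (k - 1) d ≤ n` and it avoids `1`, i.e. `a ≠ 1` and
`(a, d) ≠ (0, 1)`. Moving every `(0, d)` to `(1, d - 1)` turns these parameters into the pairs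
with `a ≥ 1`; for `n = (k - 1) D` there are `(k - 1) (D - d)` of them with step `d ≤ D`, in total
`(k - 1) D (D - 1) / 2`.
-/

open Finset

def arithProg (k a d : ℕ) : Finset ℕ := (range k).image fun i => a + i * d

section arithProg

variable {k a d : ℕ}

lemma mem_arithProg {x : ℕ} : x ∈ arithProg k a d ↔ ∃ i < k, a + i * d = x := by
  simp [arithProg]

lemma le_of_mem_arithProg {x : ℕ} (hx : x ∈ arithProg k a d) : a ≤ x := by
  obtain ⟨i, -, rfl⟩ := mem_arithProg.1 hx
  exact Nat.le_add_right _ _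

lemma card_arithProg (hd : 0 < d) : #(arithProg k a d) = k := by
  rw [arithProg, card_image_of_injective _ fun i j h => ?_, card_range]
  exact Nat.eq_of_mul_eq_mul_right hd (Nat.add_left_cancel h)

/-- The start of a progression is its least element, and the step is the gap to the next one. -/
lemma arithProg_injOn (hk : 2 ≤ k) :
    Set.InjOn (fun p : ℕ × ℕ => arithProg k p.1 p.2) {p | 0 < p.2} := by
  have start_le {a d a' d'} (h : arithProg k a d = arithProg k a' d') : a' ≤ a :=
    le_of_mem_arithProg (h ▸ mem_arithProg.2 ⟨0, by omega, by simp⟩)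
  have step_le {a d d'} (hd : 0 < d) (h : arithProg k a d = arithProg k a d') : d' ≤ d := by
    obtain ⟨i, -, hi⟩ := mem_arithProg.1 (h ▸ mem_arithProg.2 ⟨1, hk, rfl⟩ : a + 1 * d ∈ _)
    rcases i with _ | i
    · omega
    · nlinarith
  rintro ⟨a, d⟩ (hd : 0 < d) ⟨a', d'⟩ (hd' : 0 < d') (h : arithProg k a d = arithProg k a' d')
  obtain rfl : a = a' := le_antisymm (start_le h.symm) (start_le h)
  rw [le_antisymm (step_le hd' h.symm) (step_le hd h)]

lemma arithProg_subset_range_iff {n : ℕ} (hk : 0 < k) :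
    arithProg k a d ⊆ range (n + 1) ↔ a + (k - 1) * d ≤ n := by
  simp only [subset_range, mem_arithProg, forall_exists_index, and_imp, forall_apply_eq_imp_iff₂]
  refine ⟨fun h => Nat.lt_succ_iff.1 (h _ (by omega)), fun h i hi => ?_⟩
  have : i * d ≤ (k - 1) * d := Nat.mul_le_mul_right d (by omega)
  omega

lemma one_mem_arithProg_iff (hk : 2 ≤ k) (hd : 0 < d) :
    1 ∈ arithProg k a d ↔ a = 1 ∨ (a, d) = (0, 1) := by
  simp only [mem_arithProg, Prod.mk.injEq]
  constructor
  · rintro ⟨_ | _ | i, -, h⟩ <;> [omega; omega; nlinarith]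
  · rintro (rfl | ⟨rfl, rfl⟩)
    exacts [⟨0, by omega, by simp⟩, ⟨1, hk, rfl⟩]

lemma arithProg_subset_insert_zero_Icc_two_iff {n : ℕ} (hk : 2 ≤ k) (hd : 0 < d) :
    arithProg k a d ⊆ insert 0 (Icc 2 n) ↔ a + (k - 1) * d ≤ n ∧ a ≠ 1 ∧ (a, d) ≠ (0, 1) := by
  have hV : (insert 0 (Icc 2 n) : Finset ℕ) = (range (n + 1)).erase 1 := by
    ext x
    simp only [mem_insert, mem_Icc, mem_erase, mem_range]
    omega
  rw [hV, subset_erase, arithProg_subset_range_iff (by omega), one_mem_arithProg_iff hk hd, not_or]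

end arithProg

lemma card_filter_exists_arithProg (S : Finset ℕ) {k : ℕ} (hk : 2 ≤ k) (T : Finset (ℕ × ℕ))
    (hT : ∀ a d, (a, d) ∈ T ↔ 0 < d ∧ arithProg k a d ⊆ S) :
    #((S.powersetCard k).filter fun P => ∃ a d, 0 < d ∧ P = arithProg k a d) = #T := by
  have hTpos : ∀ p ∈ T, 0 < p.2 := fun p hp => ((hT p.1 p.2).1 hp).1
  have : (S.powersetCard k).filter (fun P => ∃ a d, 0 < d ∧ P = arithProg k a d) =
      T.image fun p => arithProg k p.1 p.2 := by
    ext P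
    simp only [mem_filter, mem_powersetCard, mem_image, Prod.exists, hT]
    constructor
    · rintro ⟨⟨hS, -⟩, a, d, hd, rfl⟩
      exact ⟨a, d, ⟨hd, hS⟩, rfl⟩
    · rintro ⟨a, d, ⟨hd, hS⟩, rfl⟩
      exact ⟨⟨hS, card_arithProg hd⟩, a, d, hd, rfl⟩
  rw [this, card_image_of_injOn fun p hp q hq => arithProg_injOn hk (hTpos p hp) (hTpos q hq)]

/-- The parameters `(a, d)` of the `(m + 1)`-term progressions in `{0, 2, 3, …, n}`. -/
def apParamsAvoidingOne (m n : ℕ) : Finset (ℕ × ℕ) :=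
  (range (n + 1) ×ˢ range (n + 1)).filter fun p =>
    0 < p.2 ∧ p.1 + m * p.2 ≤ n ∧ p.1 ≠ 1 ∧ p ≠ (0, 1)

lemma mem_apParamsAvoidingOne {m n a d : ℕ} (hm : 0 < m) :
    (a, d) ∈ apParamsAvoidingOne m n ↔ 0 < d ∧ a + m * d ≤ n ∧ a ≠ 1 ∧ (a, d) ≠ (0, 1) := by
  simp only [apParamsAvoidingOne, mem_filter, mem_product, mem_range, and_iff_right_iff_imp]
  rintro ⟨-, h, -⟩
  have : d ≤ m * d := Nat.le_mul_of_pos_left d hm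
  omega

/-- Shifting `(0, d) ↦ (1, d - 1)` fills the starts at `1` that were removed; then the starts
with step `d` are `1, …, m * j` for `j = D - d`. -/
lemma card_apParamsAvoidingOne {m : ℕ} (hm : 0 < m) (D : ℕ) :
    #(apParamsAvoidingOne m (m * D)) = m * ∑ j ∈ range D, j := by
  have hsigma :
      #(apParamsAvoidingOne m (m * D)) = #((range D).sigma fun j => Icc 1 (m * j)) := by
    refine card_nbij' (fun p => if p.1 = 0 then ⟨D - p.2 + 1, 1⟩ else ⟨D - p.2, p.1⟩)
      (fun q => if q.2 = 1 then (0, D - q.1 + 1) else (q.2, D - q.1)) ?_ ?_ ?_ ?_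
    · rintro ⟨a, d⟩ h
      rw [mem_coe, mem_apParamsAvoidingOne hm] at h
      have hdD : d ≤ D := Nat.le_of_mul_le_mul_left (by omega) hm
      have := Nat.mul_sub m D d
      have : 0 < m * (D - d + 1) := by positivity
      dsimp only
      split_ifs <;> simp only [coe_sigma, Set.mem_sigma_iff, mem_coe, mem_range, mem_Icc] <;>
        grind
    · rintro ⟨j, b⟩ h
      simp only [coe_sigma, Set.mem_sigma_iff, mem_coe, mem_range, mem_Icc] at h
      have hj : 0 < j := Nat.pos_of_ne_zero fun hj => by simp [hj] at h; omega
      have := Nat.mul_sub m D j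
      have : m * j ≤ m * D := Nat.mul_le_mul_left m h.1.le
      have : m * (D - j + 1) ≤ m * D := Nat.mul_le_mul_left m (by omega)
      dsimp only
      split_ifs <;> rw [mem_coe, mem_apParamsAvoidingOne hm] <;> grind
    · rintro ⟨a, d⟩ h
      rw [mem_coe, mem_apParamsAvoidingOne hm] at h
      have hdD : d ≤ D := Nat.le_of_mul_le_mul_left (by omega) hm
      dsimp only
      split_ifs <;> grind
    · rintro ⟨j, b⟩ h
      simp only [coe_sigma, Set.mem_sigma_iff, mem_coe, mem_range, mem_Icc] at h
      have hj : 0 < j := Nat.pos_of_ne_zero fun hj => by simp [hj] at h; omega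
      dsimp only
      split_ifs <;> grind
  rw [hsigma, card_sigma, mul_sum]
  simp

theorem stmt_7 (n k : ℕ) (hk : 4 ≤ k) (hkn : k ≤ n) (hdvd : (k - 1) ∣ n)
    (V : Finset ℕ) (hVdef : V = insert 0 (Finset.Icc 2 n)) :
    ((V.powersetCard k).filter
        (fun P => ∃ a d : ℕ, 0 < d ∧
          P = (Finset.range k).image (fun i => a + i * d))).card
      = n * (n - k + 1) / (2 * (k - 1)) := by
  obtain ⟨m, rfl⟩ : ∃ m, k = m + 1 := ⟨k - 1, by omega⟩
  rw [Nat.add_sub_cancel] at hdvd ⊢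
  obtain ⟨D, rfl⟩ := hdvd
  subst hVdef
  have hm : 0 < m := by omega
  have hD : 2 ≤ D := by
    by_contra! hD
    have : m * D ≤ m * 1 := Nat.mul_le_mul_left m (by omega)
    omega
  have hparams (a d : ℕ) : (a, d) ∈ apParamsAvoidingOne m (m * D) ↔
      0 < d ∧ arithProg (m + 1) a d ⊆ insert 0 (Icc 2 (m * D)) := by
    rw [mem_apParamsAvoidingOne hm, and_congr_right_iff]
    intro hd
    rw [arithProg_subset_insert_zero_Icc_two_iff (by omega) hd, Nat.add_sub_cancel]
  calc _ = #(apParamsAvoidingOne m (m * D)) :=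
        card_filter_exists_arithProg _ (by omega) _ hparams
    _ = m * ∑ j ∈ range D, j := card_apParamsAvoidingOne hm D
    _ = m * D * (m * D - (m + 1) + 1) / (2 * m) := by
      have hsum := sum_range_id_mul_two D
      have : m * D - (m + 1) + 1 = m * (D - 1) := by
        rw [Nat.mul_sub_one]
        omega
      rw [this]
      refine (Nat.div_eq_of_eq_mul_left (by omega) ?_).symm
      rw [mul_mul_mul_comm, ← hsum]
      ring
end
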